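/- Let n ≥ 2 and 1 ≤ ℓ ≤ n−1. If u ∈ L¹(ℝⁿ, Λ^ℓ) is a co-closed ℓ-form, i.e. δu = 0 in the sense of distributions on ℝⁿ, then every component of u has vanishing integral: ∫_{ℝⁿ} u(x) dx = 0 (component-wise). In particular every divergence-free vector field u ∈ L¹(ℝⁿ, ℂⁿ) satisfies ∫_{ℝⁿ} u = 0. -/

import Mathlib

/-!
Fix a component `I`, some `i ∈ I`, and test `δu = 0` against the `(ℓ-1)`-forms
`φ_c = c⁻¹ ψ(c x) dx_{I∖i}`, where `ψ` is smooth, compactly supported and agrees with `x_i`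
near `0`. The differentials of `c⁻¹ ψ(c ·)` are uniformly bounded and tend pointwise to
`dx_i` as `c → 0`, so by dominated convergence `∫ ⟨u, dφ_c⟩` tends to `± ∫ u_I`; since it
vanishes for every `c ≠ 0`, so does `∫ u_I`.
-/

open MeasureTheory Filter Topology

theorem Pi.single_apply_rec {ι α : Type*} [DecidableEq ι] [Zero α] {p : α → Prop} (h0 : p 0)
    {a : α} (ha : p a) (i j : ι) : p ((Pi.single i a : ι → α) j) := by
  rw [Pi.single_apply]
  split_ifs <;> assumption

theorem fderiv_single_apply {ι E F : Type*} [DecidableEq ι] [NormedAddCommGroup E]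
    [NormedSpace ℝ E] [NormedAddCommGroup F] [NormedSpace ℝ F] (i j : ι) (g : E → F) (x : E) :
    fderiv ℝ ((Pi.single i g : ι → E → F) j) x =
      (Pi.single i (fderiv ℝ g x) : ι → E →L[ℝ] F) j :=
  Pi.apply_single (fun _ g => fderiv ℝ g x) (fun _ => by simp) i g j

section Rescale

variable {E F : Type*} [NormedAddCommGroup E] [NormedSpace ℝ E]
  [NormedAddCommGroup F] [NormedSpace ℝ F]

noncomputable def rescale (c : ℝ) (ψ : E → F) : E → F := fun x => c⁻¹ • ψ (c • x)

theorem ContDiff.rescale {k : WithTop ℕ∞} {ψ : E → F} (hψ : ContDiff ℝ k ψ) (c : ℝ) :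
    ContDiff ℝ k (rescale c ψ) :=
  (hψ.comp (contDiff_const_smul c)).const_smul c⁻¹

theorem HasCompactSupport.rescale {ψ : E → F} (hψ : HasCompactSupport ψ) {c : ℝ}
    (hc : c ≠ 0) : HasCompactSupport (rescale c ψ) :=
  (hψ.comp_smul hc).smul_left (f := fun _ => c⁻¹)

theorem fderiv_rescale {ψ : E → F} (hψ : Differentiable ℝ ψ) {c : ℝ} (hc : c ≠ 0) (x : E) :
    fderiv ℝ (rescale c ψ) x = fderiv ℝ ψ (c • x) := by
  have h := (hψ (c • x)).hasFDerivAt.comp x ((hasFDerivAt_id x).const_smul c)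
  refine (h.const_smul c⁻¹).fderiv.trans ?_
  ext v
  simp [smul_smul, inv_mul_cancel₀ hc]

theorem tendsto_fderiv_rescale {ψ : E → F} (hψ : ContDiff ℝ 1 ψ) (x : E) :
    Tendsto (fun c => fderiv ℝ (rescale c ψ) x) (𝓝[≠] 0) (𝓝 (fderiv ℝ ψ 0)) := by
  have hsmul : Tendsto (fun c : ℝ => c • x) (𝓝 0) (𝓝 0) := by
    simpa using (tendsto_id (x := 𝓝 (0 : ℝ))).smul_const x
  have hlim := ((hψ.continuous_fderiv one_ne_zero).tendsto _).comp hsmul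
  refine (hlim.mono_left nhdsWithin_le_nhds).congr' ?_
  filter_upwards [self_mem_nhdsWithin] with c hc
  exact (fderiv_rescale (hψ.differentiable one_ne_zero) hc x).symm

theorem exists_contDiff_hasCompactSupport_fderiv_zero_eq [FiniteDimensional ℝ E]
    (L : E →L[ℝ] F) :
    ∃ ψ : E → F, ContDiff ℝ (⊤ : ℕ∞) ψ ∧ HasCompactSupport ψ ∧ fderiv ℝ ψ 0 = L := by
  let χ : ContDiffBump (0 : E) := ⟨1, 2, one_pos, one_lt_two⟩
  refine ⟨fun x => χ x • L x, χ.contDiff.smul L.contDiff,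
    χ.hasCompactSupport.smul_right (f' := L), ?_⟩
  refine (L.hasFDerivAt.congr_of_eventuallyEq ?_).fderiv
  filter_upwards [χ.eventuallyEq_one] with x hx
  simp [hx]

end Rescale

section Forms

variable {n ℓ : ℕ}

/-- The component `(dφ)_I` at a point where the differentials of the components `φ_J` are
`D J`; with it, the integral in the hypothesis of the main theorem is `extDerivPairing`. -/
noncomputable def extDerivOfDiff
    (D : {J : Finset (Fin n) // J.card = ℓ - 1} → EuclideanSpace ℝ (Fin n) →L[ℝ] ℂ)
    (I : {I : Finset (Fin n) // I.card = ℓ}) : ℂ :=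
  ∑ i ∈ I.1.attach,
    (-1 : ℂ) ^ ((I.1.filter (fun j => j < i.1)).card) *
      D ⟨I.1.erase i.1, by rw [Finset.card_erase_of_mem i.2, I.2]⟩
        (EuclideanSpace.single i.1 1)

theorem continuous_extDerivOfDiff (I : {I : Finset (Fin n) // I.card = ℓ}) :
    Continuous fun D => extDerivOfDiff D I := by
  unfold extDerivOfDiff
  fun_prop

theorem norm_extDerivOfDiff_le
    {D : {J : Finset (Fin n) // J.card = ℓ - 1} → EuclideanSpace ℝ (Fin n) →L[ℝ] ℂ} {C : ℝ}
    (hD : ∀ J, ‖D J‖ ≤ C) (I : {I : Finset (Fin n) // I.card = ℓ}) :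
    ‖extDerivOfDiff D I‖ ≤ ℓ * C := by
  calc ‖extDerivOfDiff D I‖
      ≤ ∑ i ∈ I.1.attach, ‖D ⟨I.1.erase i.1, by rw [Finset.card_erase_of_mem i.2, I.2]⟩‖ := by
        refine (norm_sum_le _ _).trans (Finset.sum_le_sum fun i _ => ?_)
        simpa using (D _).le_opNorm (EuclideanSpace.single i.1 (1 : ℝ))
    _ ≤ ∑ _i ∈ I.1.attach, C := Finset.sum_le_sum fun i _ => hD _
    _ = ℓ * C := by simp [I.2]

noncomputable def coordinateCLM (i : Fin n) : EuclideanSpace ℝ (Fin n) →L[ℝ] ℂ :=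
  Complex.ofRealCLM.comp (EuclideanSpace.proj i)

theorem extDerivOfDiff_single_coordinateCLM {I : {I : Finset (Fin n) // I.card = ℓ}} {i : Fin n}
    (hi : i ∈ I.1) (I' : {I : Finset (Fin n) // I.card = ℓ}) :
    extDerivOfDiff (Pi.single ⟨I.1.erase i, by rw [Finset.card_erase_of_mem hi, I.2]⟩
      (coordinateCLM i)) I' =
      if I' = I then (-1 : ℂ) ^ ((I.1.filter (fun j => j < i)).card) else 0 := by
  have hcoord (j : Fin n) :
      coordinateCLM i (EuclideanSpace.single j 1) = if j = i then 1 else 0 := by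
    by_cases hj : j = i <;> simp [coordinateCLM, hj]
  unfold extDerivOfDiff
  by_cases hiI' : i ∈ I'.1
  · rw [Finset.sum_eq_single_of_mem ⟨i, hiI'⟩ (Finset.mem_attach _ _)]
    · by_cases hI : I' = I
      · subst hI
        simp [hcoord]
      · have hne : I'.1.erase i ≠ I.1.erase i :=
          fun h => hI (Subtype.ext (Finset.erase_injOn' i hiI' hi h))
        simp [hne, hI]
    · intro j _ hj
      have hj : j.1 ≠ i := fun h => hj (Subtype.ext h)
      rw [Pi.single_apply]
      split_ifs <;> simp [hcoord, hj]
  · have hI : I' ≠ I := fun h => hiI' (h ▸ hi)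
    rw [if_neg hI]
    refine Finset.sum_eq_zero fun j _ => ?_
    have hj : j.1 ≠ i := fun h => hiI' (h ▸ j.2)
    rw [Pi.single_apply]
    split_ifs <;> simp [hcoord, hj]

noncomputable def extDerivPairing
    (u : EuclideanSpace ℝ (Fin n) → {I : Finset (Fin n) // I.card = ℓ} → ℂ)
    (φ : {J : Finset (Fin n) // J.card = ℓ - 1} → EuclideanSpace ℝ (Fin n) → ℂ) : ℂ :=
  ∑ I, ∫ x, u x I * extDerivOfDiff (fun J => fderiv ℝ (φ J) x) I

theorem tendsto_extDerivPairing {ι : Type*} {l : Filter ι} [l.IsCountablyGenerated]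
    {u : EuclideanSpace ℝ (Fin n) → {I : Finset (Fin n) // I.card = ℓ} → ℂ}
    (hu : ∀ I, Integrable (fun x => u x I))
    {φ : ι → {J : Finset (Fin n) // J.card = ℓ - 1} → EuclideanSpace ℝ (Fin n) → ℂ}
    (hφ : ∀ c J, ContDiff ℝ 1 (φ c J)) {C : ℝ}
    (hbound : ∀ᶠ c in l, ∀ J x, ‖fderiv ℝ (φ c J) x‖ ≤ C)
    {D : {J : Finset (Fin n) // J.card = ℓ - 1} → EuclideanSpace ℝ (Fin n) →L[ℝ] ℂ}
    (hlim : ∀ J x, Tendsto (fun c => fderiv ℝ (φ c J) x) l (𝓝 (D J))) :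
    Tendsto (fun c => extDerivPairing u (φ c)) l
      (𝓝 (∑ I, (∫ x, u x I) * extDerivOfDiff D I)) := by
  refine tendsto_finsetSum _ fun I _ => ?_
  rw [← integral_mul_const]
  refine tendsto_integral_filter_of_dominated_convergence (fun x => ‖u x I‖ * (ℓ * C))
    (Eventually.of_forall fun c => (hu I).aestronglyMeasurable.mul
      ((continuous_extDerivOfDiff I).comp
        (continuous_pi fun J => (hφ c J).continuous_fderiv one_ne_zero)).aestronglyMeasurable)
    (hbound.mono fun c hc => ae_of_all _ fun x => ?_) ((hu I).norm.mul_const _)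
    (ae_of_all _ fun x => ?_)
  · rw [norm_mul]
    exact mul_le_mul_of_nonneg_left (norm_extDerivOfDiff_le (fun J => hc J x) I) (norm_nonneg _)
  · exact (((continuous_extDerivOfDiff I).tendsto D).comp
      (tendsto_pi_nhds.2 fun J => hlim J x)).const_mul (u x I)

theorem tendsto_extDerivPairing_single_rescale
    {u : EuclideanSpace ℝ (Fin n) → {I : Finset (Fin n) // I.card = ℓ} → ℂ}
    (hu : ∀ I, Integrable (fun x => u x I)) {ψ : EuclideanSpace ℝ (Fin n) → ℂ}
    (hψ : ContDiff ℝ 1 ψ) (hψ_supp : HasCompactSupport ψ)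
    (J : {J : Finset (Fin n) // J.card = ℓ - 1}) :
    Tendsto (fun c => extDerivPairing u (Pi.single J (rescale c ψ))) (𝓝[≠] 0)
      (𝓝 (∑ I, (∫ x, u x I) * extDerivOfDiff (Pi.single J (fderiv ℝ ψ 0)) I)) := by
  obtain ⟨C, hC⟩ :=
    (hψ_supp.fderiv ℝ).exists_bound_of_continuous (hψ.continuous_fderiv one_ne_zero)
  refine tendsto_extDerivPairing hu
    (fun c => Pi.single_apply_rec contDiff_const (hψ.rescale c) J) (C := C) ?_ ?_
  · filter_upwards [self_mem_nhdsWithin] with c hc K x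
    rw [fderiv_single_apply, fderiv_rescale (hψ.differentiable one_ne_zero) hc]
    exact Pi.single_apply_rec (p := (‖·‖ ≤ C)) (by simpa using (norm_nonneg _).trans (hC 0))
      (hC _) J K
  · intro K x
    simp only [fderiv_single_apply]
    exact (((continuous_apply K).comp (continuous_single J)).tendsto _).comp
      (tendsto_fderiv_rescale hψ x)

end Forms

/-- **Vanishing integral of integrable co-closed forms on `ℝⁿ`.**

Let `n ≥ 2` and `1 ≤ ℓ ≤ n − 1`.  An `ℓ`-form on `ℝⁿ` with values in `Λ^ℓ(ℂⁿ)` is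
represented by its family of components `u x I : ℂ`, indexed by the subsets
`I ⊆ {0, …, n−1}` with `#I = ℓ`.  The hypothesis `hδ` expresses that `δ u = 0` in the
sense of distributions: for every smooth compactly supported `(ℓ−1)`-form `φ`
(given by its components `φ J`), the pairing `∫ ⟨u, dφ⟩ = 0`, where the exterior
derivative has components `(dφ)_I = ∑_{i ∈ I} (−1)^{#{j ∈ I : j < i}} ∂ᵢ φ_{I∖{i}}`.

The conclusion: every component of `u` has vanishing integral.  In particular every
divergence-free vector field `u ∈ L¹(ℝⁿ, ℂⁿ)` (case `ℓ = 1`) has `∫_{ℝⁿ} u = 0`. -/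
theorem integral_eq_zero_of_coclosed_L1
    (n ℓ : ℕ) (hl1 : 1 ≤ ℓ)
    (u : EuclideanSpace ℝ (Fin n) → {I : Finset (Fin n) // I.card = ℓ} → ℂ)
    (hu : ∀ I, Integrable (fun x => u x I))
    (hδ : ∀ φ : {J : Finset (Fin n) // J.card = ℓ - 1} → EuclideanSpace ℝ (Fin n) → ℂ,
      (∀ J, ContDiff ℝ (⊤ : ℕ∞) (φ J)) → (∀ J, HasCompactSupport (φ J)) →
      (∑ I : {I : Finset (Fin n) // I.card = ℓ},
        ∫ x, u x I *
          ∑ i ∈ I.1.attach,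
            (-1 : ℂ) ^ ((I.1.filter (fun j => j < i.1)).card) *
              fderiv ℝ (φ ⟨I.1.erase i.1, by
                rw [Finset.card_erase_of_mem i.2, I.2]⟩) x (EuclideanSpace.single i.1 1)) = 0) :
    ∀ I, (∫ x, u x I) = 0 := by
  intro I
  obtain ⟨i, hi⟩ : I.1.Nonempty := Finset.card_pos.mp (by rw [I.2]; omega)
  obtain ⟨ψ, hψ, hψ_supp, hψ_zero⟩ :=
    exists_contDiff_hasCompactSupport_fderiv_zero_eq (coordinateCLM i)
  let J : {J : Finset (Fin n) // J.card = ℓ - 1} :=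
    ⟨I.1.erase i, by rw [Finset.card_erase_of_mem hi, I.2]⟩
  have hlim := tendsto_extDerivPairing_single_rescale hu (hψ.of_le (by simp)) hψ_supp J
  have hzero : ∀ᶠ c in 𝓝[≠] 0, extDerivPairing u (Pi.single J (rescale c ψ)) = 0 := by
    filter_upwards [self_mem_nhdsWithin] with c hc
    exact hδ _ (Pi.single_apply_rec contDiff_const (hψ.rescale c) J)
      (Pi.single_apply_rec HasCompactSupport.zero (hψ_supp.rescale hc) J)
  have hsum :=
    tendsto_nhds_unique hlim (tendsto_const_nhds.congr' (hzero.mono fun _ h => h.symm))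
  simpa [J, hψ_zero, extDerivOfDiff_single_coordinateCLM hi] using hsum
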